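/- Suppose f : ℝ^p → ℝ satisfies RSC/RSS of order 2k + k* with constants 0 < α ≤ L. Let w* be k*-group-sparse with S* = supp(w*) (k* ≥ 1), let w_t be k-group-sparse, and let g_t = w_t − (1/L)∇f(w_t). Let i_1, …, i_k be a greedy selection for g_t, let w_{t+1} = (g_t)_{B_k} be the greedy projection with parameter k, and S_{t+1} = supp(w_{t+1}). Then for every integer k̃ with 1 ≤ k̃ < k: ‖w_{t+1} − w*‖ ≤ (1 + √(k*/(k − k̃))) · [ (1 − α/L)‖w_t − w*‖ + (1/L)‖(∇f(w*))_{S_{t+1} ∪ S*}‖ ] + e^{−k̃/(2k*)} · √(k*/(k − k̃)) · ‖(g_t)_{S*}‖. -/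

import Mathlib

open Finset

noncomputable section

/-- The restriction of a vector to a coordinate set: agrees with `z` on `S`, zero off `S`. -/
def restrict {p : ℕ} (z : EuclideanSpace ℝ (Fin p)) (S : Finset (Fin p)) :
    EuclideanSpace ℝ (Fin p) :=
  WithLp.toLp 2 (fun i => if i ∈ S then z i else 0)

open Classical in
/-- The support of a vector, as a finite set. -/
noncomputable def suppF {p : ℕ} (z : EuclideanSpace ℝ (Fin p)) : Finset (Fin p) :=
  Finset.univ.filter (fun i => z i ≠ 0)

/-- `w` is `k`-group-sparse w.r.t. the groups `G`. -/
def GroupSparse {p M : ℕ} (G : Fin M → Finset (Fin p)) (k : ℕ)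
    (w : EuclideanSpace ℝ (Fin p)) : Prop :=
  ∃ A : Finset (Fin M), A.card ≤ k ∧ suppF w ⊆ A.biUnion G

/-- `B_j`: the union of the first `j` selected groups. -/
def partialUnion {p M m : ℕ} (G : Fin M → Finset (Fin p)) (idx : Fin m → Fin M) (j : ℕ) :
    Finset (Fin p) :=
  (Finset.univ.filter (fun t : Fin m => (t : ℕ) < j)).biUnion (fun t => G (idx t))

/-- `idx` is a greedy selection for `z` (Algorithm 2 of the paper): at each step `j`,
the selected group maximizes the norm of `z` restricted to the yet-uncovered part. -/
def IsGreedySelection {p M m : ℕ} (G : Fin M → Finset (Fin p))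
    (z : EuclideanSpace ℝ (Fin p)) (idx : Fin m → Fin M) : Prop :=
  ∀ j : Fin m, ∀ ℓ : Fin M,
    ‖restrict z (G ℓ \ partialUnion G idx (j : ℕ))‖ ≤
      ‖restrict z (G (idx j) \ partialUnion G idx (j : ℕ))‖

/-- `w` is an exact projection of `z` onto `k`-group-sparse vectors. -/
def IsExactProj {p M : ℕ} (G : Fin M → Finset (Fin p)) (k : ℕ)
    (z w : EuclideanSpace ℝ (Fin p)) : Prop :=
  GroupSparse G k w ∧ ∀ w', GroupSparse G k w' → ‖w - z‖ ≤ ‖w' - z‖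

/-- `f` satisfies restricted strong convexity / smoothness of order `k'`
with constants `α ≤ L`. -/
def RSCRSS {p M : ℕ} (G : Fin M → Finset (Fin p)) (k' : ℕ) (α L : ℝ)
    (f : EuclideanSpace ℝ (Fin p) → ℝ) : Prop :=
  ContDiff ℝ 2 f ∧
  ∀ w : EuclideanSpace ℝ (Fin p), GroupSparse G k' w →
    ∀ v : EuclideanSpace ℝ (Fin p),
      α * ‖v‖ ^ 2 ≤ iteratedFDeriv ℝ 2 f w ![v, v] ∧
      iteratedFDeriv ℝ 2 f w ![v, v] ≤ L * ‖v‖ ^ 2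

/-! Put `h = g_t - w*` and `B = B_k`. Coordinatewise, `w_{t+1} - w* = h_{B ∪ S*} - (g_t)_{S* \ B}`,
and `h_{B ∪ S*} = h_{S_{t+1} ∪ S*}`, so the error splits into two terms.

The first is `(w_t - w*) - (∇f(w_t) - ∇f(w*))/L - ∇f(w*)/L` restricted to `S_{t+1} ∪ S*`: the
mean value theorem and RSC/RSS on the segment `[w*, w_t]`, whose points are `(k + k*)`-group-sparse,
make `x ↦ x - ∇f(x)/L` a `(1 - α/L)`-contraction there.

For the second, `S*` is covered by `k*` groups, so every greedy step collects at least a `1/k*`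
fraction of the mass `‖(g_t)_{S* \ B_j}‖²` still left on `S*`. After `k̃` steps at most
`(1 - 1/k*)^k̃ ≤ e^{-k̃/k*}` of `‖(g_t)_{S*}‖²` is left, and each of the remaining `k - k̃` steps
collects at least `‖(g_t)_{S* \ B}‖² / k*`; what is not collected from `S*` lies in `B \ S*`, where
`g_t = h`. -/

open Real

theorem sub_le_one_sub_inv_pow_mul {u : ℕ → ℝ} {s K : ℝ} {n : ℕ} (hK : 1 ≤ K) (hs : 0 ≤ s)
    (h0 : 0 ≤ u 0) (hmono : ∀ j < n, u j ≤ u (j + 1))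
    (hgain : ∀ j < n, s - u j ≤ K * (u (j + 1) - u j)) :
    ∀ j ≤ n, s - u j ≤ (1 - K⁻¹) ^ j * s := by
  have hβ : 0 ≤ 1 - K⁻¹ := sub_nonneg.2 (inv_le_one_of_one_le₀ hK)
  intro j
  induction j with
  | zero => intro _; simpa using h0
  | succ j ih =>
    intro hj
    have ih := ih (by omega)
    have hm := hmono j hj
    have hg := hgain j hj
    rcases le_or_gt (s - u j) 0 with hneg | hpos
    · have : 0 ≤ (1 - K⁻¹) ^ (j + 1) * s := by positivity
      linarith
    · have hK0 : 0 < K := by linarith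
      have hdrop : (s - u j) * K⁻¹ ≤ u (j + 1) - u j := by
        rw [← div_eq_mul_inv, div_le_iff₀ hK0]; linarith
      calc s - u (j + 1) ≤ (1 - K⁻¹) * (s - u j) := by linarith
        _ ≤ (1 - K⁻¹) * ((1 - K⁻¹) ^ j * s) := mul_le_mul_of_nonneg_left ih hβ
        _ = (1 - K⁻¹) ^ (j + 1) * s := by ring

theorem mul_le_sub_of_le_sub_succ {u : ℕ → ℝ} {d : ℝ} {a n : ℕ} (han : a ≤ n)
    (h : ∀ j, a ≤ j → j < n → d ≤ u (j + 1) - u j) : ((n : ℝ) - a) * d ≤ u n - u a := by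
  have hsum := Finset.card_nsmul_le_sum (Ico a n) (fun j => u (j + 1) - u j) d
    (fun j hj => h j (mem_Ico.1 hj).1 (mem_Ico.1 hj).2)
  rwa [Finset.sum_Ico_sub u han, Nat.card_Ico, nsmul_eq_mul, Nat.cast_sub han] at hsum

theorem one_sub_inv_pow_le_exp_sq {K : ℝ} (hK : 1 ≤ K) (n : ℕ) :
    (1 - K⁻¹) ^ n ≤ exp (-n / (2 * K)) ^ 2 := by
  calc (1 - K⁻¹) ^ n ≤ exp (-K⁻¹) ^ n :=
        pow_le_pow_left₀ (sub_nonneg.2 (inv_le_one_of_one_le₀ hK)) (one_sub_le_exp_neg _) n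
    _ = exp (-n / (2 * K)) ^ 2 := by
        rw [← exp_nat_mul, ← exp_nat_mul]; congr 1; push_cast; ring

theorem sum_biUnion_le_sum_sum {ι κ : Type*} [DecidableEq ι] {c : ι → ℝ} (hc : ∀ i, 0 ≤ c i)
    (A : Finset κ) (F : κ → Finset ι) :
    ∑ i ∈ A.biUnion F, c i ≤ ∑ ℓ ∈ A, ∑ i ∈ F ℓ, c i := by
  classical
  induction A using Finset.induction with
  | empty => simp
  | insert a A ha ih =>
    rw [biUnion_insert, sum_insert ha]
    have hsplit := sum_union_inter (s₁ := F a) (s₂ := A.biUnion F) (f := c)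
    have hinter : 0 ≤ ∑ i ∈ F a ∩ A.biUnion F, c i := sum_nonneg fun i _ => hc i
    linarith

section Restrict

variable {p : ℕ}

theorem restrict_apply (z : EuclideanSpace ℝ (Fin p)) (S : Finset (Fin p)) (i : Fin p) :
    restrict z S i = if i ∈ S then z i else 0 := rfl

theorem mem_suppF {z : EuclideanSpace ℝ (Fin p)} {i : Fin p} : i ∈ suppF z ↔ z i ≠ 0 := by
  simp [suppF]

theorem restrict_sub (z z' : EuclideanSpace ℝ (Fin p)) (S : Finset (Fin p)) :
    restrict (z - z') S = restrict z S - restrict z' S := by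
  ext i; simp only [restrict_apply, PiLp.sub_apply]; split_ifs <;> simp

theorem restrict_smul (c : ℝ) (z : EuclideanSpace ℝ (Fin p)) (S : Finset (Fin p)) :
    restrict (c • z) S = c • restrict z S := by
  ext i; simp only [restrict_apply, PiLp.smul_apply, smul_eq_mul]; split_ifs <;> simp

theorem restrict_congr {z z' : EuclideanSpace ℝ (Fin p)} {S : Finset (Fin p)}
    (h : ∀ i ∈ S, z i = z' i) : restrict z S = restrict z' S := by
  ext i
  simp only [restrict_apply]
  split_ifs with hi
  exacts [h i hi, rfl]

theorem restrict_eq_restrict_of_mem_iff {z : EuclideanSpace ℝ (Fin p)} {S T : Finset (Fin p)}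
    (h : ∀ i, z i ≠ 0 → (i ∈ S ↔ i ∈ T)) : restrict z S = restrict z T := by
  ext i
  simp only [restrict_apply]
  by_cases hz : z i = 0
  · simp [hz]
  · simp [h i hz]

theorem norm_restrict_sq (z : EuclideanSpace ℝ (Fin p)) (S : Finset (Fin p)) :
    ‖restrict z S‖ ^ 2 = ∑ i ∈ S, z i ^ 2 := by
  simp only [EuclideanSpace.norm_sq_eq, restrict_apply, Real.norm_eq_abs, sq_abs, ite_pow,
    ne_eq, OfNat.ofNat_ne_zero, not_false_eq_true, zero_pow, sum_ite_mem, univ_inter]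

theorem norm_restrict_mono (z : EuclideanSpace ℝ (Fin p)) {S T : Finset (Fin p)} (h : S ⊆ T) :
    ‖restrict z S‖ ≤ ‖restrict z T‖ := by
  rw [← sq_le_sq₀ (norm_nonneg _) (norm_nonneg _), norm_restrict_sq, norm_restrict_sq]
  exact sum_le_sum_of_subset_of_nonneg h fun i _ _ => sq_nonneg _

theorem norm_restrict_le (z : EuclideanSpace ℝ (Fin p)) (S : Finset (Fin p)) :
    ‖restrict z S‖ ≤ ‖z‖ := by
  calc ‖restrict z S‖ ≤ ‖restrict z univ‖ := norm_restrict_mono z (subset_univ S)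
    _ = ‖z‖ := by congr 1; ext i; simp [restrict_apply]

theorem restrict_union_suppF (g w : EuclideanSpace ℝ (Fin p)) (B : Finset (Fin p)) :
    restrict (g - w) (B ∪ suppF w) = restrict (g - w) (suppF (restrict g B) ∪ suppF w) := by
  refine restrict_eq_restrict_of_mem_iff fun i hi => ?_
  simp only [mem_union, mem_suppF, restrict_apply]
  by_cases hw : w i = 0
  · have hg : g i ≠ 0 := by simpa [hw] using hi
    by_cases hB : i ∈ B <;> simp [hB, hg, hw]
  · simp [hw]

theorem restrict_sub_eq (g w : EuclideanSpace ℝ (Fin p)) (B : Finset (Fin p)) :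
    restrict g B - w = restrict (g - w) (B ∪ suppF w) - restrict g (suppF w \ B) := by
  ext i
  simp only [PiLp.sub_apply, restrict_apply, mem_union, mem_sdiff, mem_suppF]
  by_cases hB : i ∈ B <;> by_cases hw : w i = 0 <;> simp [hB, hw]

theorem norm_restrict_sub_le (g w : EuclideanSpace ℝ (Fin p)) (B : Finset (Fin p)) :
    ‖restrict g B - w‖ ≤
      ‖restrict (g - w) (suppF (restrict g B) ∪ suppF w)‖ + ‖restrict g (suppF w \ B)‖ := by
  rw [restrict_sub_eq, restrict_union_suppF]
  exact norm_sub_le _ _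

theorem norm_restrict_sdiff_suppF_le (g w : EuclideanSpace ℝ (Fin p)) (B : Finset (Fin p)) :
    ‖restrict g (B \ suppF w)‖ ≤ ‖restrict (g - w) (suppF (restrict g B) ∪ suppF w)‖ := by
  have hgw : restrict g (B \ suppF w) = restrict (g - w) (B \ suppF w) := by
    refine restrict_congr fun i hi => ?_
    simp [not_not.1 (mem_suppF.not.1 (mem_sdiff.1 hi).2)]
  rw [hgw, ← restrict_union_suppF]
  exact norm_restrict_mono _ (sdiff_subset.trans subset_union_left)

end Restrict

section Greedy
variable {p M m : ℕ} {G : Fin M → Finset (Fin p)} {idx : Fin m → Fin M}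

theorem partialUnion_mono (G : Fin M → Finset (Fin p)) (idx : Fin m → Fin M) {j j' : ℕ}
    (h : j ≤ j') : partialUnion G idx j ⊆ partialUnion G idx j' :=
  biUnion_subset_biUnion_of_subset_left _ fun t ht => by
    simp only [mem_filter, mem_univ, true_and] at ht ⊢; omega

theorem partialUnion_succ (G : Fin M → Finset (Fin p)) (idx : Fin m → Fin M) {j : ℕ}
    (hj : j < m) : partialUnion G idx (j + 1) = partialUnion G idx j ∪ G (idx ⟨j, hj⟩) := by
  have : (univ.filter fun t : Fin m => (t : ℕ) < j + 1) =
      insert ⟨j, hj⟩ (univ.filter fun t : Fin m => (t : ℕ) < j) := by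
    ext t; simp only [mem_filter, mem_univ, true_and, mem_insert, Fin.ext_iff]; omega
  rw [partialUnion, this, biUnion_insert, union_comm]
  rfl

theorem sum_partialUnion_succ (c : Fin p → ℝ) {j : ℕ} (hj : j < m) :
    ∑ i ∈ partialUnion G idx (j + 1), c i =
      ∑ i ∈ partialUnion G idx j, c i + ∑ i ∈ G (idx ⟨j, hj⟩) \ partialUnion G idx j, c i := by
  rw [partialUnion_succ G idx hj, ← union_sdiff_self_eq_union, sum_union disjoint_sdiff]

def IsWeightedGreedySelection (G : Fin M → Finset (Fin p)) (c : Fin p → ℝ)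
    (idx : Fin m → Fin M) : Prop :=
  ∀ (j : Fin m) ℓ, ∑ i ∈ G ℓ \ partialUnion G idx j, c i ≤
    ∑ i ∈ G (idx j) \ partialUnion G idx j, c i

theorem IsGreedySelection.isWeightedGreedySelection_sq {z : EuclideanSpace ℝ (Fin p)}
    (hg : IsGreedySelection G z idx) : IsWeightedGreedySelection G (fun i => z i ^ 2) idx := by
  intro j ℓ
  rw [← norm_restrict_sq, ← norm_restrict_sq]
  exact pow_le_pow_left₀ (norm_nonneg _) (hg j ℓ) 2

variable {c : Fin p → ℝ} {S : Finset (Fin p)} {A : Finset (Fin M)}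

theorem sum_sdiff_partialUnion_le_card_mul (hc : ∀ i, 0 ≤ c i)
    (hg : IsWeightedGreedySelection G c idx)
    (hS : S ⊆ A.biUnion G) (j : Fin m) :
    ∑ i ∈ S \ partialUnion G idx j, c i ≤
      #A * ∑ i ∈ G (idx j) \ partialUnion G idx j, c i := by
  have hcover : S \ partialUnion G idx j ⊆ A.biUnion fun ℓ => G ℓ \ partialUnion G idx j := by
    intro i hi
    obtain ⟨ℓ, hℓ, hiG⟩ := mem_biUnion.1 (hS (mem_sdiff.1 hi).1)
    exact mem_biUnion.2 ⟨ℓ, hℓ, mem_sdiff.2 ⟨hiG, (mem_sdiff.1 hi).2⟩⟩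
  calc ∑ i ∈ S \ partialUnion G idx j, c i
      ≤ ∑ i ∈ A.biUnion fun ℓ => G ℓ \ partialUnion G idx j, c i :=
        sum_le_sum_of_subset_of_nonneg hcover fun i _ _ => hc i
    _ ≤ ∑ ℓ ∈ A, ∑ i ∈ G ℓ \ partialUnion G idx j, c i := sum_biUnion_le_sum_sum hc _ _
    _ ≤ ∑ _ℓ ∈ A, ∑ i ∈ G (idx j) \ partialUnion G idx j, c i := sum_le_sum fun ℓ _ => hg j ℓ
    _ = #A * ∑ i ∈ G (idx j) \ partialUnion G idx j, c i := by rw [sum_const, nsmul_eq_mul]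

theorem sum_sdiff_partialUnion_le (hc : ∀ i, 0 ≤ c i)
    (hg : IsWeightedGreedySelection G c idx)
    {K : ℕ} (hK : 1 ≤ K) (hA : #A ≤ K) (hS : S ⊆ A.biUnion G) {ktil : ℕ} (hktil : ktil < m) :
    ((m : ℝ) - ktil) / K * ∑ i ∈ S \ partialUnion G idx m, c i ≤
      ∑ i ∈ partialUnion G idx m \ S, c i + (1 - (K : ℝ)⁻¹) ^ ktil * ∑ i ∈ S, c i := by
  set u : ℕ → ℝ := fun j => ∑ i ∈ partialUnion G idx j, c i with hu
  have hK0 : (0 : ℝ) < K := by exact_mod_cast hK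
  have hstep : ∀ j (hj : j < m), ∑ i ∈ S \ partialUnion G idx j, c i ≤ K * (u (j + 1) - u j) := by
    intro j hj
    have := sum_sdiff_partialUnion_le_card_mul hc hg hS ⟨j, hj⟩
    simp only [hu, sum_partialUnion_succ c hj, add_sub_cancel_left]
    exact this.trans (mul_le_mul_of_nonneg_right (by exact_mod_cast hA)
      (sum_nonneg fun i _ => hc i))
  have hdecay : ∑ i ∈ S, c i - u ktil ≤ (1 - (K : ℝ)⁻¹) ^ ktil * ∑ i ∈ S, c i := by
    refine sub_le_one_sub_inv_pow_mul (n := m) (by exact_mod_cast hK)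
      (sum_nonneg fun i _ => hc i) (sum_nonneg fun i _ => hc i) (fun j hj => ?_)
      (fun j hj => ?_) ktil hktil.le
    · simp only [hu, sum_partialUnion_succ c hj, le_add_iff_nonneg_right]
      exact sum_nonneg fun i _ => hc i
    · refine le_trans ?_ (hstep j hj)
      rw [← sum_inter_add_sum_sdiff S (partialUnion G idx j), add_sub_right_comm]
      have : ∑ i ∈ S ∩ partialUnion G idx j, c i ≤ u j :=
        sum_le_sum_of_subset_of_nonneg inter_subset_right fun i _ _ => hc i
      linarith
  have htail : ((m : ℝ) - ktil) * ((∑ i ∈ S \ partialUnion G idx m, c i) / K) ≤ u m - u ktil := by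
    refine mul_le_sub_of_le_sub_succ hktil.le fun j _ hj => ?_
    rw [div_le_iff₀' hK0]
    refine le_trans (sum_le_sum_of_subset_of_nonneg ?_ fun i _ _ => hc i) (hstep j hj)
    exact sdiff_subset_sdiff subset_rfl (partialUnion_mono G idx hj.le)
  have hcover : u m ≤ ∑ i ∈ S, c i + ∑ i ∈ partialUnion G idx m \ S, c i := by
    simp only [hu]
    rw [← sum_inter_add_sum_sdiff (partialUnion G idx m) S]
    gcongr
    exacts [fun i _ _ => hc i, inter_subset_right]
  rw [div_mul_eq_mul_div, mul_div_assoc]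
  linarith

theorem IsGreedySelection.norm_restrict_sdiff_le {z : EuclideanSpace ℝ (Fin p)}
    (hg : IsGreedySelection G z idx) {K : ℕ} (hK : 1 ≤ K) (hA : #A ≤ K) (hS : S ⊆ A.biUnion G)
    {ktil : ℕ} (hktil : ktil < m) :
    ‖restrict z (S \ partialUnion G idx m)‖ ≤
      √((K : ℝ) / ((m : ℝ) - ktil)) * ‖restrict z (partialUnion G idx m \ S)‖ +
        exp (-(ktil : ℝ) / (2 * K)) * √((K : ℝ) / ((m : ℝ) - ktil)) * ‖restrict z S‖ := by
  set ρ := (K : ℝ) / ((m : ℝ) - ktil)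
  set E := exp (-(ktil : ℝ) / (2 * K))
  have hm : (0 : ℝ) < (m : ℝ) - ktil := sub_pos.2 (by exact_mod_cast hktil)
  have hmass := sum_sdiff_partialUnion_le (fun i => sq_nonneg (z i)) hg.isWeightedGreedySelection_sq hK hA hS hktil
  simp only [← norm_restrict_sq] at hmass
  have hpow := one_sub_inv_pow_le_exp_sq (K := (K : ℝ)) (by exact_mod_cast hK) ktil
  have hρ : 0 ≤ ρ := by positivity
  set X := ‖restrict z (S \ partialUnion G idx m)‖
  set Y := ‖restrict z (partialUnion G idx m \ S)‖
  set Z := ‖restrict z S‖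
  have hsq : X ^ 2 ≤ (√ρ * Y + E * √ρ * Z) ^ 2 := by
    calc X ^ 2 = ρ * ((m - ktil) / K * X ^ 2) := by simp only [ρ]; field_simp
      _ ≤ ρ * (Y ^ 2 + E ^ 2 * Z ^ 2) := by gcongr; exact hmass.trans (by gcongr)
      _ ≤ ρ * (Y + E * Z) ^ 2 := by
        have : 0 ≤ Y * (E * Z) := by positivity
        gcongr
        nlinarith
      _ = (√ρ * Y + E * √ρ * Z) ^ 2 := by
        rw [show √ρ * Y + E * √ρ * Z = √ρ * (Y + E * Z) by ring, mul_pow, sq_sqrt hρ]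
  exact (pow_le_pow_iff_left₀ (norm_nonneg _) (by positivity) two_ne_zero).1 hsq

end Greedy

section Sparsity
variable {p M : ℕ} {G : Fin M → Finset (Fin p)} {k k' : ℕ} {u v : EuclideanSpace ℝ (Fin p)}

theorem GroupSparse.mono (hu : GroupSparse G k u) (hk : k ≤ k') : GroupSparse G k' u :=
  let ⟨A, hA, hsupp⟩ := hu
  ⟨A, hA.trans hk, hsupp⟩

theorem GroupSparse.smul (hu : GroupSparse G k u) (c : ℝ) : GroupSparse G k (c • u) :=
  let ⟨A, hA, hsupp⟩ := hu
  ⟨A, hA, fun _ hi => hsupp (mem_suppF.2 (right_ne_zero_of_mul (mem_suppF.1 hi)))⟩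

theorem GroupSparse.add (hu : GroupSparse G k u) (hv : GroupSparse G k' v) :
    GroupSparse G (k + k') (u + v) := by
  classical
  obtain ⟨A, hA, hAu⟩ := hu
  obtain ⟨B, hB, hBv⟩ := hv
  refine ⟨A ∪ B, (card_union_le A B).trans (add_le_add hA hB), fun i hi => ?_⟩
  rw [union_biUnion, mem_union]
  by_cases hui : u i = 0
  · have : v i ≠ 0 := by simpa [hui] using mem_suppF.1 hi
    exact Or.inr (hBv (mem_suppF.2 this))
  · exact Or.inl (hAu (mem_suppF.2 hui))

theorem GroupSparse.of_mem_segment (hu : GroupSparse G k u) (hv : GroupSparse G k' v)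
    {x : EuclideanSpace ℝ (Fin p)} (hx : x ∈ segment ℝ u v) : GroupSparse G (k + k') x := by
  obtain ⟨a, b, -, -, -, rfl⟩ := hx
  exact (hu.smul a).add (hv.smul b)

end Sparsity

section Smoothness
variable {E : Type*} [NormedAddCommGroup E] [InnerProductSpace ℝ E]

/-- Cauchy–Schwarz for the positive semidefinite form `L⟪·,·⟫ - D`. -/
theorem abs_mul_inner_sub_le (D : E →L[ℝ] E →L[ℝ] ℝ) (hsym : ∀ u v, D u v = D v u) {α L : ℝ}
    (hαL : α ≤ L) (hlow : ∀ v, α * ‖v‖ ^ 2 ≤ D v v) (hup : ∀ v, D v v ≤ L * ‖v‖ ^ 2)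
    (u v : E) : |L * inner ℝ u v - D u v| ≤ (L - α) * ‖u‖ * ‖v‖ := by
  set C : E → E → ℝ := fun x y => L * inner ℝ x y - D x y with hC
  have hCnonneg : ∀ x, 0 ≤ C x x := fun x => by
    simp only [hC, real_inner_self_eq_norm_sq]; linarith [hup x]
  have hCle : ∀ x, C x x ≤ (L - α) * ‖x‖ ^ 2 := fun x => by
    simp only [hC, real_inner_self_eq_norm_sq]; linarith [hlow x]
  have hquad : ∀ t : ℝ, 0 ≤ C v v * (t * t) + 2 * C u v * t + C u u := by
    intro t
    convert hCnonneg (u + t • v) using 1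
    simp only [hC, map_add, map_smul, add_apply,
      smul_apply, smul_eq_mul, inner_add_left, inner_add_right,
      real_inner_smul_left, real_inner_smul_right, real_inner_comm u v, hsym v u]
    ring
  have hdisc := discrim_le_zero hquad
  rw [discrim] at hdisc
  have hsq : C u v ^ 2 ≤ ((L - α) * ‖u‖ * ‖v‖) ^ 2 := by
    have := mul_le_mul (hCle u) (hCle v) (hCnonneg v) (by nlinarith [hCnonneg u, hCle u])
    nlinarith [hCnonneg u, hCnonneg v]
  exact abs_le_of_sq_le_sq' hsq (by positivity) |> abs_le.2

theorem exists_mem_segment_inner_gradient_sub_eq [CompleteSpace E] {f : E → ℝ}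
    (hf : Differentiable ℝ (fderiv ℝ f)) (a b e : E) :
    ∃ x ∈ segment ℝ a b,
      inner ℝ e (gradient f b - gradient f a) = fderiv ℝ (fderiv ℝ f) x (b - a) e := by
  set γ : ℝ → E := fun s => a + s • (b - a)
  have hγ : ∀ s, HasDerivAt γ (b - a) s := fun s =>
    (((hasDerivAt_id s).smul_const (b - a)).const_add a).congr_deriv (one_smul ℝ _)
  have hφ : ∀ s, HasDerivAt (fun s => fderiv ℝ f (γ s) e)
      (fderiv ℝ (fderiv ℝ f) (γ s) (b - a) e) s := fun s => by
    simpa using ((hf (γ s)).hasFDerivAt.comp_hasDerivAt s (hγ s)).clm_apply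
      (hasDerivAt_const s e)
  obtain ⟨ξ, hξ, hslope⟩ := exists_hasDerivAt_eq_slope _ _ zero_lt_one
    (fun s _ => (hφ s).continuousAt.continuousWithinAt) (fun s _ => hφ s)
  refine ⟨γ ξ, segment_eq_image' ℝ a b ▸ ⟨ξ, Set.Ioo_subset_Icc_self hξ, rfl⟩, ?_⟩
  have hgrad : ∀ x, inner ℝ e (gradient f x) = fderiv ℝ f x e := fun x => by
    rw [real_inner_comm, gradient, InnerProductSpace.toDual_symm_apply]
  rw [hslope, inner_sub_right, hgrad, hgrad]
  simp [γ]

theorem norm_sub_sub_smul_gradient_sub_le [CompleteSpace E] {f : E → ℝ} (hf : ContDiff ℝ 2 f)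
    {α L : ℝ} (hL : 0 < L) (hαL : α ≤ L) {a b : E}
    (hD : ∀ x ∈ segment ℝ a b, ∀ v, α * ‖v‖ ^ 2 ≤ fderiv ℝ (fderiv ℝ f) x v v ∧
      fderiv ℝ (fderiv ℝ f) x v v ≤ L * ‖v‖ ^ 2) :
    ‖(b - a) - (1 / L) • (gradient f b - gradient f a)‖ ≤ (1 - α / L) * ‖b - a‖ := by
  set e := (b - a) - (1 / L) • (gradient f b - gradient f a) with he
  obtain ⟨x, hx, hmv⟩ := exists_mem_segment_inner_gradient_sub_eq
    ((hf.fderiv_right (m := 1) (by norm_num)).differentiable one_ne_zero) a b e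
  have hsym : ∀ v w, fderiv ℝ (fderiv ℝ f) x v w = fderiv ℝ (fderiv ℝ f) x w v :=
    hf.contDiffAt.isSymmSndFDerivAt (by simp)
  have hbound := abs_mul_inner_sub_le _ hsym hαL (fun v => (hD x hx v).1)
    (fun v => (hD x hx v).2) (b - a) e
  have hsq : ‖e‖ ^ 2 ≤ (1 - α / L) * ‖b - a‖ * ‖e‖ := by
    calc ‖e‖ ^ 2 = inner ℝ e e := (real_inner_self_eq_norm_sq e).symm
      _ = (1 / L) * (L * inner ℝ (b - a) e - fderiv ℝ (fderiv ℝ f) x (b - a) e) := by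
          nth_rw 2 [he]
          rw [inner_sub_right, real_inner_smul_right, hmv, real_inner_comm]
          field_simp
      _ ≤ (1 / L) * ((L - α) * ‖b - a‖ * ‖e‖) := by
          gcongr; exact (le_abs_self _).trans hbound
      _ = (1 - α / L) * ‖b - a‖ * ‖e‖ := by field_simp
  rcases (norm_nonneg e).eq_or_lt with he0 | he0
  · rw [← he0]
    exact mul_nonneg (sub_nonneg.2 ((div_le_one hL).2 hαL)) (norm_nonneg _)
  · nlinarith

end Smoothness

theorem RSCRSS.norm_sub_sub_smul_gradient_sub_le {p M : ℕ} {G : Fin M → Finset (Fin p)}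
    {K k k' : ℕ} {α L : ℝ} {f : EuclideanSpace ℝ (Fin p) → ℝ} (hf : RSCRSS G K α L f)
    (hL : 0 < L) (hαL : α ≤ L) {a b : EuclideanSpace ℝ (Fin p)} (ha : GroupSparse G k a)
    (hb : GroupSparse G k' b) (hK : k + k' ≤ K) :
    ‖(b - a) - (1 / L) • (gradient f b - gradient f a)‖ ≤ (1 - α / L) * ‖b - a‖ :=
  _root_.norm_sub_sub_smul_gradient_sub_le hf.1 hL hαL fun x hx v => by
    simpa [iteratedFDeriv_two_apply] using hf.2 x ((ha.of_mem_segment hb hx).mono hK) v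

theorem stmt_9_general (p M : ℕ)
    (G : Fin M → Finset (Fin p))
    (f : EuclideanSpace ℝ (Fin p) → ℝ)
    (kstar k : ℕ) (hkstar : 1 ≤ kstar)
    (α L : ℝ) (hα : 0 < α) (hαL : α ≤ L)
    (hf : RSCRSS G (2 * k + kstar) α L f)
    (wstar : EuclideanSpace ℝ (Fin p)) (hwstar : GroupSparse G kstar wstar)
    (wt : EuclideanSpace ℝ (Fin p)) (hwt : GroupSparse G k wt)
    (gt : EuclideanSpace ℝ (Fin p)) (hgt : gt = wt - (1 / L) • gradient f wt)
    (idx : Fin k → Fin M) (hgreedy : IsGreedySelection G gt idx)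
    (wt1 : EuclideanSpace ℝ (Fin p)) (hwt1 : wt1 = restrict gt (partialUnion G idx k))
    (ktil : ℕ) (h2 : ktil < k) :
    ‖wt1 - wstar‖ ≤
      (1 + Real.sqrt ((kstar : ℝ) / ((k : ℝ) - (ktil : ℝ)))) *
        ((1 - α / L) * ‖wt - wstar‖ +
          (1 / L) * ‖restrict (gradient f wstar) (suppF wt1 ∪ suppF wstar)‖) +
      Real.exp (-(ktil : ℝ) / (2 * (kstar : ℝ))) *
        Real.sqrt ((kstar : ℝ) / ((k : ℝ) - (ktil : ℝ))) *
        ‖restrict gt (suppF wstar)‖ := by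
  have hL : 0 < L := hα.trans_le hαL
  have hcontr := hf.norm_sub_sub_smul_gradient_sub_le hL hαL hwstar hwt (by omega)
  obtain ⟨A, hA, hsupp⟩ := hwstar
  subst hwt1
  set T := suppF (restrict gt (partialUnion G idx k)) ∪ suppF wstar
  have hT : ‖restrict (gt - wstar) T‖ ≤
      (1 - α / L) * ‖wt - wstar‖ + (1 / L) * ‖restrict (gradient f wstar) T‖ := by
    have : gt - wstar = ((wt - wstar) - (1 / L) • (gradient f wt - gradient f wstar)) -
        (1 / L) • gradient f wstar := by rw [hgt]; module
    rw [this, restrict_sub, restrict_smul]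
    refine (norm_sub_le _ _).trans (add_le_add ((norm_restrict_le _ _).trans hcontr) ?_)
    rw [norm_smul, Real.norm_of_nonneg (by positivity)]
  have hS := hgreedy.norm_restrict_sdiff_le hkstar hA hsupp h2
  have hB := norm_restrict_sdiff_suppF_le gt wstar (partialUnion G idx k)
  calc _ ≤ ‖restrict (gt - wstar) T‖ + ‖restrict gt (suppF wstar \ partialUnion G idx k)‖ :=
        norm_restrict_sub_le _ _ _
    _ ≤ _ := by
      have hρ := Real.sqrt_nonneg ((kstar : ℝ) / ((k : ℝ) - (ktil : ℝ)))
      linarith [mul_le_mul_of_nonneg_left hB hρ, mul_le_mul_of_nonneg_left hT hρ]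

/-- one step of IHT with the greedy projection, under RSC/RSS of order
`2k + k*`: for every `1 ≤ k̃ < k`,
`‖w_{t+1} − w*‖ ≤ (1 + √(k*/(k − k̃)))·[(1 − α/L)‖w_t − w*‖ + (1/L)‖(∇f(w*))_{S_{t+1}∪S*}‖]
 + e^{−k̃/(2k*)}·√(k*/(k − k̃))·‖(g_t)_{S*}‖`. -/
theorem stmt_9 (p M : ℕ) (hp : 1 ≤ p) (hM : 1 ≤ M)
    (G : Fin M → Finset (Fin p)) (hcov : ∀ i : Fin p, ∃ j : Fin M, i ∈ G j)
    (f : EuclideanSpace ℝ (Fin p) → ℝ)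
    (kstar k : ℕ) (hkstar : 1 ≤ kstar)
    (α L : ℝ) (hα : 0 < α) (hαL : α ≤ L)
    (hf : RSCRSS G (2 * k + kstar) α L f)
    (wstar : EuclideanSpace ℝ (Fin p)) (hwstar : GroupSparse G kstar wstar)
    (wt : EuclideanSpace ℝ (Fin p)) (hwt : GroupSparse G k wt)
    (gt : EuclideanSpace ℝ (Fin p)) (hgt : gt = wt - (1 / L) • gradient f wt)
    (idx : Fin k → Fin M) (hgreedy : IsGreedySelection G gt idx)
    (wt1 : EuclideanSpace ℝ (Fin p)) (hwt1 : wt1 = restrict gt (partialUnion G idx k))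
    (ktil : ℕ) (h1 : 1 ≤ ktil) (h2 : ktil < k) :
    ‖wt1 - wstar‖ ≤
      (1 + Real.sqrt ((kstar : ℝ) / ((k : ℝ) - (ktil : ℝ)))) *
        ((1 - α / L) * ‖wt - wstar‖ +
          (1 / L) * ‖restrict (gradient f wstar) (suppF wt1 ∪ suppF wstar)‖) +
      Real.exp (-(ktil : ℝ) / (2 * (kstar : ℝ))) *
        Real.sqrt ((kstar : ℝ) / ((k : ℝ) - (ktil : ℝ))) *
        ‖restrict gt (suppF wstar)‖ :=
  stmt_9_general p M G f kstar k hkstar α L hα hαL hf wstar hwstar wt hwt gt hgt idx hgreedy wt1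
    hwt1 ktil h2
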